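/- arXiv:2012.05966 — 2 statements merged into one kernel-verified Lean document; each statement's English description precedes it below -/
import Mathlib

section
/- Let (A,B) be controllable with A ∈ ℝ^{4×4}, B ∈ ℝ^{4×1}, let λ₁,λ₂,λ₃,λ₄ be desired eigenvalues, P(λ)=∏_{i=1}^4(λ−λ_i), P₁(λ)=∏_{i=1}^3(λ−λ_i), k^T = e^T P(A) the Ackermann gain, and η^T = e^T P₁(A). Then η^T (A − B k^T) = λ₄ η^T, i.e., η^T is a left eigenvector of the closed-loop matrix A* = A − B k^T with eigenvalue λ₄. -/
open Matrix Polynomial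

/-! Since `e` is the last row of the inverse controllability matrix, `e ⬝ᵥ Aʲ B` vanishes for
`j < 3` and equals `1` for `j = 3`; as `P₁` is monic of degree 3 this gives `η ⬝ᵥ B = 1`.
With `P = P₁ · (X - λ₄)` we get `k = η A - λ₄ η`, hence
`η (A - B kᵀ) = η A - (η ⬝ᵥ B) k = λ₄ η`. -/

section

variable {R : Type*} [CommRing R]

theorem inv_apply_dotProduct_pow_mulVec {m : ℕ} (A Ctrb : Matrix (Fin m) (Fin m) R)
    (B : Fin m → R) (hCtrb : ∀ i j : Fin m, Ctrb i j = (A ^ (j : ℕ) *ᵥ B) i)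
    (hinv : IsUnit Ctrb.det) (i j : Fin m) :
    Ctrb⁻¹ i ⬝ᵥ (A ^ (j : ℕ) *ᵥ B) = (1 : Matrix (Fin m) (Fin m) R) i j := by
  rw [← nonsing_inv_mul Ctrb hinv, mul_apply]
  exact Finset.sum_congr rfl fun _ _ => by rw [hCtrb]

theorem inv_last_dotProduct_pow_mulVec {m : ℕ} (A Ctrb : Matrix (Fin (m + 1)) (Fin (m + 1)) R)
    (B : Fin (m + 1) → R) (hCtrb : ∀ i j : Fin (m + 1), Ctrb i j = (A ^ (j : ℕ) *ᵥ B) i)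
    (hinv : IsUnit Ctrb.det) {j : ℕ} (hj : j ≤ m) :
    Ctrb⁻¹ (Fin.last m) ⬝ᵥ (A ^ j *ᵥ B) = if j = m then 1 else 0 := by
  rw [inv_apply_dotProduct_pow_mulVec A Ctrb B hCtrb hinv (Fin.last m) ⟨j, by omega⟩, one_apply]
  simp only [Fin.ext_iff, Fin.val_last, eq_comm]

variable {n : Type*} [Fintype n] [DecidableEq n]

theorem vecMul_aeval_dotProduct_eq_one {m : ℕ} (A : Matrix n n R) (B e : n → R) {Q : R[X]}
    (hQ : Q.Monic) (hdeg : Q.natDegree = m)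
    (hδ : ∀ j ≤ m, e ⬝ᵥ (A ^ j *ᵥ B) = if j = m then 1 else 0) :
    (e ᵥ* aeval A Q) ⬝ᵥ B = 1 := by
  rw [← dotProduct_mulVec, aeval_eq_sum_range, sum_mulVec, dotProduct_sum, hdeg]
  calc ∑ j ∈ Finset.range (m + 1), e ⬝ᵥ ((Q.coeff j • A ^ j) *ᵥ B)
      = ∑ j ∈ Finset.range (m + 1), if j = m then Q.coeff j else 0 :=
        Finset.sum_congr rfl fun j hj => by
          rw [smul_mulVec, dotProduct_smul, hδ j (Nat.lt_succ_iff.mp (Finset.mem_range.mp hj)),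
            smul_eq_mul, mul_ite, mul_one, mul_zero]
    _ = 1 := by
      rw [Finset.sum_ite_eq', if_pos (Finset.self_mem_range_succ m), ← hdeg, hQ.coeff_natDegree]

theorem vecMul_sub_vecMulVec_aeval_mul_X_sub_C (A : Matrix n n R) (B e : n → R)
    (Q : R[X]) (μ : R) (hQ : (e ᵥ* aeval A Q) ⬝ᵥ B = 1) :
    (e ᵥ* aeval A Q) ᵥ* (A - vecMulVec B (e ᵥ* aeval A (Q * (X - C μ)))) =
      μ • (e ᵥ* aeval A Q) := by
  set η := e ᵥ* aeval A Q
  have hk : e ᵥ* aeval A (Q * (X - C μ)) = η ᵥ* A - μ • η := by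
    rw [map_mul, map_sub, aeval_X, aeval_C, Algebra.algebraMap_eq_smul_one, ← vecMul_vecMul,
      vecMul_sub, vecMul_smul, vecMul_one]
  rw [hk, vecMul_sub, vecMul_vecMulVec, hQ, one_smul, sub_sub_cancel]

end

/-- With the Ackermann gain `k` placing eigenvalues `λ₁,…,λ₄` and
`η = e ᵥ* P₁(A)` (where `P₁` has roots `λ₁,λ₂,λ₃`), the row vector `η` is a left
eigenvector of the closed-loop matrix `A - B kᵀ` with eigenvalue `λ₄`. -/
theorem stmt1
    (A : Matrix (Fin 4) (Fin 4) ℝ) (B : Fin 4 → ℝ)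
    (Ctrb : Matrix (Fin 4) (Fin 4) ℝ)
    (hCtrb : ∀ i j : Fin 4, Ctrb i j = ((A ^ (j : ℕ)) *ᵥ B) i)
    (hinv : IsUnit Ctrb.det)
    (e : Fin 4 → ℝ) (he : ∀ j, e j = Ctrb⁻¹ 3 j)
    (lam₁ lam₂ lam₃ lam₄ : ℝ)
    (P P₁ : Polynomial ℝ)
    (hP : P = (X - C lam₁) * (X - C lam₂) * (X - C lam₃) * (X - C lam₄))
    (hP₁ : P₁ = (X - C lam₁) * (X - C lam₂) * (X - C lam₃))
    (k η : Fin 4 → ℝ)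
    (hk : k = Matrix.vecMul e (Polynomial.aeval A P))
    (hη : η = Matrix.vecMul e (Polynomial.aeval A P₁)) :
    Matrix.vecMul η (A - Matrix.vecMulVec B k) = lam₄ • η := by
  have hmonic : P₁.Monic := by rw [hP₁]; monicity!
  have hdeg : P₁.natDegree = 3 := by rw [hP₁]; compute_degree!
  have hPfac : P = P₁ * (X - C lam₄) := by rw [hP, hP₁]
  obtain rfl : e = Ctrb⁻¹ (Fin.last 3) := funext he
  have hηB : η ⬝ᵥ B = 1 := hη ▸ vecMul_aeval_dotProduct_eq_one A B _ hmonic hdeg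
    fun _ hj => inv_last_dotProduct_pow_mulVec A Ctrb B hCtrb hinv hj
  subst hk hη hPfac
  exact vecMul_sub_vecMulVec_aeval_mul_X_sub_C A B _ P₁ lam₄ hηB
end

section
/- With the Ackermann gain k^T = e^T P(A) for a controllable pair (A,B) in ℝ^4, the characteristic polynomial of the closed-loop matrix A − B k^T equals P(λ) = (λ−λ₁)(λ−λ₂)(λ−λ₃)(λ−λ₄). -/
/-!
Write `M = A - B kᵀ` and let `e` satisfy `e Aʲ B = δⱼₙ` for `j ≤ n`, as the last row of the
inverse controllability matrix does. Then `e Mʲ = e Aʲ` for `j ≤ n` and `e Mⁿ⁺¹ = e Aⁿ⁺¹ - k`,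
so `e P(M) = e P(A) - k = 0`. By Cayley–Hamilton also `e χ_M(M) = 0`, hence the polynomial
`P - χ_M` of degree `≤ n` satisfies `e (P - χ_M)(M) = 0`. Pairing `e r(M)` with `Mⁱ B` reads off
the coefficients of `r`, so the only such polynomial is `0`.
-/

open Matrix Polynomial

/-- The defining property of the last row `e` of the inverse of the controllability matrix
`[B, A B, …, Aⁿ B]`. -/
def IsAckermannRow {R ι : Type*} [CommRing R] [Fintype ι] [DecidableEq ι]
    (A : Matrix ι ι R) (B e : ι → R) (n : ℕ) : Prop :=
  ∀ j ≤ n, e ⬝ᵥ (A ^ j *ᵥ B) = if j = n then 1 else 0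

theorem isAckermannRow_inv_last {R : Type*} [CommRing R] {n : ℕ}
    {A Ctrb : Matrix (Fin (n + 1)) (Fin (n + 1)) R} {B : Fin (n + 1) → R}
    (hCtrb : ∀ i j : Fin (n + 1), Ctrb i j = (A ^ (j : ℕ) *ᵥ B) i) (hinv : IsUnit Ctrb.det) :
    IsAckermannRow A B (Ctrb⁻¹ (Fin.last n)) n := by
  intro j hj
  have h := congrFun (congrFun (nonsing_inv_mul Ctrb hinv) (Fin.last n)) ⟨j, by omega⟩
  simp only [mul_apply, hCtrb, one_apply, Fin.ext_iff, Fin.val_last] at h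
  exact h.trans (if_congr eq_comm rfl rfl)

namespace IsAckermannRow

variable {R ι : Type*} [CommRing R] [Fintype ι] [DecidableEq ι]
  {A : Matrix ι ι R} {B e k : ι → R} {n : ℕ}

theorem dotProduct_aeval_mulVec (he : IsAckermannRow A B e n) {r : R[X]}
    (hr : r.natDegree ≤ n) :
    e ⬝ᵥ (aeval A r *ᵥ B) = r.coeff n := by
  rw [aeval_eq_sum_range' (Nat.lt_succ_of_le hr), sum_mulVec, dotProduct_sum,
    Finset.sum_congr rfl fun j hj => by
      rw [smul_mulVec, dotProduct_smul, he j (Nat.lt_succ_iff.mp (Finset.mem_range.mp hj))]]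
  simp

theorem eq_zero_of_vecMul_aeval_eq_zero [Nontrivial R] (he : IsAckermannRow A B e n)
    {r : R[X]} (hr : r.natDegree ≤ n) (hzero : e ᵥ* aeval A r = 0) : r = 0 := by
  by_contra hr0
  have hshift : (r * X ^ (n - r.natDegree)).natDegree = n := by
    rw [natDegree_mul_X_pow _ hr0]; omega
  have hcoeff := he.dotProduct_aeval_mulVec hshift.le
  rw [map_mul, map_pow, aeval_X, ← mulVec_mulVec, dotProduct_mulVec, hzero, zero_dotProduct,
    ← Nat.add_sub_of_le hr, Nat.add_sub_cancel_left, coeff_mul_X_pow] at hcoeff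
  exact leadingCoeff_ne_zero.mpr hr0 hcoeff.symm

theorem vecMul_sub_vecMulVec_pow_of_le (he : IsAckermannRow A B e n) {j : ℕ} (hj : j ≤ n) :
    e ᵥ* (A - vecMulVec B k) ^ j = e ᵥ* A ^ j := by
  induction j with
  | zero => simp
  | succ j ih =>
    rw [pow_succ, ← vecMul_vecMul, ih (by omega), vecMul_sub, vecMul_vecMul, ← pow_succ,
      vecMul_vecMulVec, ← dotProduct_mulVec, he j (by omega), if_neg (by omega), zero_smul,
      sub_zero]

theorem vecMul_sub_vecMulVec_pow_succ (he : IsAckermannRow A B e n) :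
    e ᵥ* (A - vecMulVec B k) ^ (n + 1) = e ᵥ* A ^ (n + 1) - k := by
  rw [pow_succ, ← vecMul_vecMul, he.vecMul_sub_vecMulVec_pow_of_le le_rfl, vecMul_sub,
    vecMul_vecMul, ← pow_succ, vecMul_vecMulVec, ← dotProduct_mulVec, he n le_rfl, if_pos rfl,
    one_smul]

theorem sub_vecMulVec (he : IsAckermannRow A B e n) :
    IsAckermannRow (A - vecMulVec B k) B e n := by
  intro j hj
  rw [dotProduct_mulVec, he.vecMul_sub_vecMulVec_pow_of_le hj, ← dotProduct_mulVec, he j hj]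

theorem vecMul_aeval_sub_vecMulVec_of_natDegree_le (he : IsAckermannRow A B e n) {q : R[X]}
    (hq : q.natDegree ≤ n) :
    e ᵥ* aeval (A - vecMulVec B k) q = e ᵥ* aeval A q := by
  simp only [aeval_eq_sum_range' (Nat.lt_succ_of_le hq), vecMul_sum, vecMul_smul]
  refine Finset.sum_congr rfl fun j hj => ?_
  rw [he.vecMul_sub_vecMulVec_pow_of_le (Nat.lt_succ_iff.mp (Finset.mem_range.mp hj))]

theorem vecMul_aeval_sub_vecMulVec_of_isMonicOfDegree (he : IsAckermannRow A B e n)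
    {P : R[X]} (hP : P.IsMonicOfDegree (n + 1)) :
    e ᵥ* aeval (A - vecMulVec B k) P = e ᵥ* aeval A P - k := by
  obtain ⟨q, rfl, hq⟩ := hP.exists_natDegree_lt n.succ_ne_zero
  rw [map_add, map_add, map_pow, map_pow, aeval_X, aeval_X, vecMul_add, vecMul_add,
    he.vecMul_sub_vecMulVec_pow_succ,
    he.vecMul_aeval_sub_vecMulVec_of_natDegree_le (Nat.lt_succ_iff.mp hq), sub_add_eq_add_sub]

theorem charpoly_sub_vecMulVec_vecMul_aeval [Nontrivial R] (he : IsAckermannRow A B e n)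
    (hcard : Fintype.card ι = n + 1) {P : R[X]} (hP : P.IsMonicOfDegree (n + 1)) :
    (A - vecMulVec B (e ᵥ* aeval A P)).charpoly = P := by
  set M := A - vecMulVec B (e ᵥ* aeval A P)
  have hχ : M.charpoly.IsMonicOfDegree (n + 1) :=
    ⟨by rw [charpoly_natDegree_eq_dim, hcard], charpoly_monic M⟩
  have hdeg : (P - M.charpoly).natDegree ≤ n :=
    Nat.lt_succ_iff.mp (hP.natDegree_sub_lt n.succ_ne_zero hχ)
  have hann : e ᵥ* aeval M (P - M.charpoly) = 0 := by
    rw [map_sub, aeval_self_charpoly, sub_zero,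
      he.vecMul_aeval_sub_vecMulVec_of_isMonicOfDegree hP, sub_self]
  exact (sub_eq_zero.mp (he.sub_vecMulVec.eq_zero_of_vecMul_aeval_eq_zero hdeg hann)).symm

end IsAckermannRow

/-- With the Ackermann gain `k = e ᵥ* P(A)` for a controllable pair `(A,B)` in `ℝ⁴`,
the characteristic polynomial of the closed-loop matrix `A - B kᵀ` equals
`P(λ) = (λ-λ₁)(λ-λ₂)(λ-λ₃)(λ-λ₄)`. -/
theorem stmt2
    (A : Matrix (Fin 4) (Fin 4) ℝ) (B : Fin 4 → ℝ)
    (Ctrb : Matrix (Fin 4) (Fin 4) ℝ)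
    (hCtrb : ∀ i j : Fin 4, Ctrb i j = ((A ^ (j : ℕ)) *ᵥ B) i)
    (hinv : IsUnit Ctrb.det)
    (e : Fin 4 → ℝ) (he : ∀ j, e j = Ctrb⁻¹ 3 j)
    (lam₁ lam₂ lam₃ lam₄ : ℝ)
    (P : Polynomial ℝ)
    (hP : P = (X - C lam₁) * (X - C lam₂) * (X - C lam₃) * (X - C lam₄))
    (k : Fin 4 → ℝ)
    (hk : k = Matrix.vecMul e (Polynomial.aeval A P)) :
    (A - Matrix.vecMulVec B k).charpoly = P := by
  have hmonic : P.IsMonicOfDegree 4 := by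
    rw [hP]
    exact (((isMonicOfDegree_X_sub_one _).mul (isMonicOfDegree_X_sub_one _)).mul
      (isMonicOfDegree_X_sub_one _)).mul (isMonicOfDegree_X_sub_one _)
  obtain rfl : e = Ctrb⁻¹ (Fin.last 3) := funext he
  subst hk
  exact (isAckermannRow_inv_last hCtrb hinv).charpoly_sub_vecMulVec_vecMul_aeval
    (Fintype.card_fin 4) hmonic
end
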